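/- arXiv:2312.17406 — 2 statements merged into one kernel-verified Lean document; each statement's English description precedes it below -/
import Mathlib

section
/- Assume parent-independent mutation: P_{ij} = Q_j for all i, j, where Q_1,…,Q_d > 0 and ∑_{j=1}^d Q_j = 1. Let q^{(σ)} be a family of sampling probabilities and let q̃_k (k ∈ ℕ) be a family of asymptotic-expansion coefficients for q^{(σ)}. Then for every k ∈ ℕ and every integer n_1 > 1: q̃_k(n_1 e_1) = q̃_k((n_1−1) e_1) − 1_{k≥1} (n_1 − 2 + θ) q̃_{k−1}((n_1−1) e_1) + 1_{k≥1} (n_1 − 2 + θ Q_1) q̃_{k−1}((n_1−2) e_1). -/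
open Finset Filter Asymptotics

noncomputable section

/-- The `i`-th standard unit vector of `ℤ^d`. -/
def stdE {d : ℕ} (i : Fin d) : Fin d → ℤ := fun j => if j = i then 1 else 0

/-- The total size `‖n‖ = n_1 + ⋯ + n_d` of a configuration. -/
def tot {d : ℕ} (n : Fin d → ℤ) : ℤ := ∑ i, n i

/-- `n ∈ ℕ^d`, i.e. all components of `n : ℤ^d` are nonnegative. -/
def IsNatVec {d : ℕ} (n : Fin d → ℤ) : Prop := ∀ i, 0 ≤ n i

/-- A family of sampling probabilities `q^{(σ)} : ℤ^d → ℝ`, indexed by `σ > 0`: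
`q^{(σ)}(0) = 1`; `q^{(σ)}(n) = 0` if `n` has a negative component; the consistency
condition `∑_i q^{(σ)}(n+e_i) = q^{(σ)}(n)` holds on `ℕ^d`; and the sampling recursion
holds on `ℕ^d ∖ {0}`.  (Allele `1` is represented by the index `0 : Fin d`.) -/
def IsSamplingFamily {d : ℕ} [NeZero d] (θ : ℝ) (P : Fin d → Fin d → ℝ)
    (q : ℝ → (Fin d → ℤ) → ℝ) : Prop :=
  (∀ σ : ℝ, 0 < σ → q σ 0 = 1) ∧
  (∀ σ : ℝ, 0 < σ → ∀ n : Fin d → ℤ, (∃ i, n i < 0) → q σ n = 0) ∧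
  (∀ σ : ℝ, 0 < σ → ∀ n : Fin d → ℤ, IsNatVec n →
    ∑ i, q σ (n + stdE i) = q σ n) ∧
  (∀ σ : ℝ, 0 < σ → ∀ n : Fin d → ℤ, IsNatVec n → n ≠ 0 →
    ((tot n : ℝ) * ((tot n : ℝ) - 1 + θ) + ((tot n : ℝ) - (n 0 : ℝ)) * σ) * q σ n =
      (∑ i, (n i : ℝ) * ((n i : ℝ) - 1) * q σ (n - stdE i))
      + (∑ i, ∑ j, (n i : ℝ) * θ * P j i * q σ (n - stdE i + stdE j))
      + σ * (tot n : ℝ) * ∑ i ∈ univ.erase 0, q σ (n + stdE i))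

/-- A family of asymptotic-expansion coefficients `q̃_k : ℤ^d → ℝ` for a family of
sampling probabilities `q^{(σ)}`:  `q̃_0(0) = 1`, `q̃_k(0) = 0` for `k ≥ 1`,
`q̃_k(n) = 0` if `n` has a negative component, and for every `n ∈ ℕ^d` and `K ∈ ℕ`,
`σ^{‖n‖-n_1} q^{(σ)}(n) - ∑_{k=0}^K q̃_k(n) σ^{-k} = O(σ^{-(K+1)})` as `σ → ∞`. -/
def IsExpansionCoeffs {d : ℕ} [NeZero d] (q : ℝ → (Fin d → ℤ) → ℝ)
    (qt : ℕ → (Fin d → ℤ) → ℝ) : Prop :=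
  qt 0 0 = 1 ∧
  (∀ k : ℕ, 1 ≤ k → qt k 0 = 0) ∧
  (∀ k : ℕ, ∀ n : Fin d → ℤ, (∃ i, n i < 0) → qt k n = 0) ∧
  (∀ n : Fin d → ℤ, IsNatVec n → ∀ K : ℕ,
    (fun σ : ℝ => σ ^ (tot n - n 0) * q σ n
        - ∑ k ∈ range (K + 1), qt k n * σ ^ (-(k : ℤ)))
      =O[atTop] fun σ : ℝ => σ ^ (-(K + 1 : ℤ)))


/-! On the fit axis `‖n‖ - n₁ = 0`, so `q^{(σ)}(c e₁)` itself has the expansion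
`∑ q̃_k(c e₁) σ^{-k}`. The sampling recursion at `(n₁ - 1) e₁`, in which parent-independence
lets the consistency condition sum out the mutation term, collapses to the exact identity
`σ (q(n₁ e₁) - q((n₁ - 1) e₁)) = (n₁ - 2 + θ Q₁) q((n₁ - 2) e₁) - (n₁ - 2 + θ) q((n₁ - 1) e₁)`.
Multiplying by `σ` shifts expansion coefficients by one, so the recursion follows by uniqueness
of asymptotic expansions. -/

open Topology

def HasAsymptoticExpansion (f : ℝ → ℝ) (a : ℕ → ℝ) : Prop :=
  ∀ K : ℕ, (fun σ : ℝ => f σ - ∑ k ∈ range (K + 1), a k * σ ^ (-(k : ℤ)))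
    =O[atTop] fun σ : ℝ => σ ^ (-(K + 1 : ℤ))

namespace HasAsymptoticExpansion

variable {f g : ℝ → ℝ} {a b : ℕ → ℝ}

theorem congr' (hf : HasAsymptoticExpansion f a) (h : f =ᶠ[atTop] g) :
    HasAsymptoticExpansion g a := fun K =>
  (hf K).congr' (h.mono fun σ hσ => by simp only [hσ]) EventuallyEq.rfl

theorem sub (hf : HasAsymptoticExpansion f a) (hg : HasAsymptoticExpansion g b) :
    HasAsymptoticExpansion (f - g) (a - b) := fun K =>
  ((hf K).sub (hg K)).congr_left fun σ => by
    simp only [Pi.sub_apply, sub_mul, sum_sub_distrib]; ring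

theorem const_mul (c : ℝ) (hf : HasAsymptoticExpansion f a) :
    HasAsymptoticExpansion (fun σ => c * f σ) (fun k => c * a k) := fun K =>
  ((hf K).const_mul_left c).congr_left fun σ => by
    simp only [mul_sub, mul_sum, mul_assoc]

theorem tendsto (hf : HasAsymptoticExpansion f a) : Tendsto f atTop (𝓝 (a 0)) := by
  have h : Tendsto (fun σ => f σ - a 0) atTop (𝓝 0) :=
    ((hf 0).trans_tendsto (tendsto_zpow_atTop_zero (by norm_num))).congr fun σ => by simp
  simpa using h.add_const (a 0)

theorem mul_id_shift (hf : HasAsymptoticExpansion f a) (ha : a 0 = 0) :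
    HasAsymptoticExpansion (fun σ => σ * f σ) (fun k => a (k + 1)) := by
  intro K
  have mul_zpow_neg_succ : ∀ σ : ℝ, σ ≠ 0 → ∀ k : ℕ,
      σ * σ ^ (-((k + 1 : ℕ) : ℤ)) = σ ^ (-(k : ℤ)) := fun σ hσ k => by
    rw [← zpow_one_add₀ hσ]; push_cast; ring_nf
  refine ((isBigO_refl (fun σ : ℝ => σ) atTop).mul (hf (K + 1))).congr' ?_ ?_
  · filter_upwards [eventually_ne_atTop 0] with σ hσ
    rw [sum_range_succ', ha, zero_mul, add_zero, mul_sub, mul_sum]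
    simp only [mul_left_comm σ, mul_zpow_neg_succ σ hσ]
  · filter_upwards [eventually_ne_atTop 0] with σ hσ
    exact_mod_cast mul_zpow_neg_succ σ hσ (K + 1)

theorem eq_zero (h : HasAsymptoticExpansion 0 a) : a = 0 := by
  funext k
  induction k generalizing a with
  | zero => exact tendsto_nhds_unique h.tendsto tendsto_const_nhds
  | succ k ih =>
    have ha : a 0 = 0 := tendsto_nhds_unique h.tendsto tendsto_const_nhds
    exact ih ((h.mul_id_shift ha).congr' (Eventually.of_forall fun σ => mul_zero σ))

theorem unique (ha : HasAsymptoticExpansion f a) (hb : HasAsymptoticExpansion f b) : a = b :=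
  sub_eq_zero.mp (eq_zero (sub_self f ▸ ha.sub hb))

theorem coeff_eq_of_mul_id (hf : HasAsymptoticExpansion f a) (hg : HasAsymptoticExpansion g b)
    (h : ∀ᶠ σ in atTop, σ * f σ = g σ) : a 0 = 0 ∧ ∀ k, a (k + 1) = b k := by
  have ha : a 0 = 0 := by
    have hlim : Tendsto (fun σ => σ⁻¹ * g σ) atTop (𝓝 (0 * b 0)) :=
      tendsto_inv_atTop_zero.mul hg.tendsto
    refine tendsto_nhds_unique hf.tendsto ((zero_mul (b 0) ▸ hlim).congr' ?_)
    filter_upwards [h, eventually_ne_atTop 0] with σ hσ hσ0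
    rw [← hσ, inv_mul_cancel_left₀ hσ0]
  exact ⟨ha, congrFun (((hf.mul_id_shift ha).congr' h).unique hg)⟩

end HasAsymptoticExpansion

section FitAxis

variable {d : ℕ}

theorem smul_stdE_apply (c : ℤ) (i j : Fin d) : (c • stdE i) j = if j = i then c else 0 := by
  simp [stdE]

theorem tot_smul_stdE (c : ℤ) (i : Fin d) : tot (c • stdE i) = c := by
  simp only [tot, smul_stdE_apply, sum_ite_eq', mem_univ, if_true]

theorem isNatVec_smul_stdE {c : ℤ} (hc : 0 ≤ c) (i : Fin d) : IsNatVec (c • stdE i) := fun j => by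
  rw [smul_stdE_apply]; split_ifs <;> simp [hc]

variable [NeZero d]

theorem IsExpansionCoeffs.hasAsymptoticExpansion_smul_stdE_zero
    {q : ℝ → (Fin d → ℤ) → ℝ} {qt : ℕ → (Fin d → ℤ) → ℝ} (hqt : IsExpansionCoeffs q qt)
    {c : ℤ} (hc : 0 ≤ c) :
    HasAsymptoticExpansion (fun σ => q σ (c • stdE 0)) (fun k => qt k (c • stdE 0)) := by
  intro K
  have h := hqt.2.2.2 _ (isNatVec_smul_stdE hc 0) K
  rw [tot_smul_stdE, smul_stdE_apply, if_pos rfl, sub_self] at h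
  simpa only [zpow_zero, one_mul] using h

theorem IsSamplingFamily.mul_sub_smul_stdE_zero {θ c : ℝ} {P : Fin d → Fin d → ℝ}
    {q : ℝ → (Fin d → ℤ) → ℝ} (hq : IsSamplingFamily θ P q) (hP : ∀ j, P j 0 = c)
    {n : ℤ} (hn : 1 < n) {σ : ℝ} (hσ : 0 < σ) :
    σ * (q σ (n • stdE 0) - q σ ((n - 1) • stdE 0))
      = ((n : ℝ) - 2 + θ * c) * q σ ((n - 2) • stdE 0)
        - ((n : ℝ) - 2 + θ) * q σ ((n - 1) • stdE 0) := by
  obtain ⟨-, -, hcons, hrec⟩ := hq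
  set E : Fin d → ℤ := stdE 0
  have hE : ∀ c : ℤ, ∀ i, (c • E) i = if i = 0 then c else 0 := fun c i => smul_stdE_apply c 0 i
  have hdown : (n - 1) • E - E = (n - 2) • E := by module
  have hup : (n - 1) • E + E = n • E := by module
  have hne : (n - 1) • E ≠ 0 := fun h => by
    have h0 := congrFun h 0
    rw [hE, if_pos rfl] at h0
    simp at h0; omega
  have hcoal : ∑ i, ((((n - 1) • E) i : ℤ) : ℝ) * ((((n - 1) • E) i : ℝ) - 1)
      * q σ ((n - 1) • E - stdE i) = ((n : ℝ) - 1) * ((n : ℝ) - 2) * q σ ((n - 2) • E) := by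
    rw [sum_eq_single 0 (fun i _ hi => by simp [hE, hi]) (by simp), hE, if_pos rfl, hdown]
    push_cast; ring
  have hmut : ∑ i, ∑ j, ((((n - 1) • E) i : ℤ) : ℝ) * θ * P j i
      * q σ ((n - 1) • E - stdE i + stdE j) = ((n : ℝ) - 1) * θ * c * q σ ((n - 2) • E) := by
    rw [sum_eq_single 0 (fun i _ hi => by simp [hE, hi]) (by simp), hE, if_pos rfl, hdown]
    rw [← hcons σ hσ ((n - 2) • E) (isNatVec_smul_stdE (by omega) 0), mul_sum]
    refine sum_congr rfl fun j _ => ?_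
    rw [hP]; push_cast; ring
  have hsel : ∑ i ∈ univ.erase 0, q σ ((n - 1) • E + stdE i)
      = q σ ((n - 1) • E) - q σ (n • E) := by
    rw [← hcons σ hσ _ (isNatVec_smul_stdE (by omega) 0), ← add_sum_erase _ _ (mem_univ 0), hup]
    ring
  have h := hrec σ hσ _ (isNatVec_smul_stdE (by omega) 0) hne
  rw [hcoal, hmut, hsel, tot_smul_stdE, hE, if_pos rfl] at h
  have hn' : (n : ℝ) - 1 ≠ 0 := sub_ne_zero.mpr (by exact_mod_cast hn.ne')
  apply mul_left_cancel₀ hn'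
  push_cast at h
  linear_combination h

end FitAxis

theorem recursion_fit_PIM_general {d : ℕ} (θ : ℝ)
    (P : Fin (d + 2) → Fin (d + 2) → ℝ)
    (Q : Fin (d + 2) → ℝ)
    (hPIM : ∀ i j, P i j = Q j)
    (q : ℝ → (Fin (d + 2) → ℤ) → ℝ) (qt : ℕ → (Fin (d + 2) → ℤ) → ℝ)
    (hq : IsSamplingFamily θ P q) (hqt : IsExpansionCoeffs q qt)
    (k : ℕ) (n₁ : ℤ) (hn₁ : 1 < n₁) :
    qt k (n₁ • stdE 0)
      = qt k ((n₁ - 1) • stdE 0)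
        - (if 1 ≤ k then ((n₁ : ℝ) - 2 + θ) * qt (k - 1) ((n₁ - 1) • stdE 0) else 0)
        + (if 1 ≤ k then ((n₁ : ℝ) - 2 + θ * Q 0) * qt (k - 1) ((n₁ - 2) • stdE 0) else 0) := by
  have expansion (c : ℤ) (hc : 0 ≤ c) := hqt.hasAsymptoticExpansion_smul_stdE_zero hc
  obtain ⟨h_zero, h_succ⟩ := HasAsymptoticExpansion.coeff_eq_of_mul_id
    ((expansion n₁ (by omega)).sub (expansion (n₁ - 1) (by omega)))
    (((expansion (n₁ - 2) (by omega)).const_mul ((n₁ : ℝ) - 2 + θ * Q 0)).sub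
      ((expansion (n₁ - 1) (by omega)).const_mul ((n₁ : ℝ) - 2 + θ)))
    ((eventually_gt_atTop 0).mono fun σ hσ =>
      hq.mul_sub_smul_stdE_zero (fun j => hPIM j 0) hn₁ hσ)
  cases k with
  | zero => simpa [sub_eq_zero] using h_zero
  | succ k =>
    have h := h_succ k
    simp only [Pi.sub_apply] at h
    simp only [le_add_iff_nonneg_left, zero_le, if_true, add_tsub_cancel_right]
    linarith

/-- **Corollary 4.4(III)** (PIM; recursion, fit allele only): under parent-independent
mutation `P_{ij} = Q_j`, for `n_1 > 1`,
`q̃_k(n_1 e_1) = q̃_k((n_1-1)e_1) - 1_{k≥1}(n_1-2+θ) q̃_{k-1}((n_1-1)e_1)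
+ 1_{k≥1}(n_1-2+θQ_1) q̃_{k-1}((n_1-2)e_1)`. -/
theorem recursion_fit_PIM {d : ℕ} (θ : ℝ) (hθ : 0 < θ)
    (P : Fin (d + 2) → Fin (d + 2) → ℝ)
    (hPnonneg : ∀ i j, 0 ≤ P i j) (hProw : ∀ i, ∑ j, P i j = 1)
    (Q : Fin (d + 2) → ℝ) (hQpos : ∀ j, 0 < Q j) (hQsum : ∑ j, Q j = 1)
    (hPIM : ∀ i j, P i j = Q j)
    (q : ℝ → (Fin (d + 2) → ℤ) → ℝ) (qt : ℕ → (Fin (d + 2) → ℤ) → ℝ)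
    (hq : IsSamplingFamily θ P q) (hqt : IsExpansionCoeffs q qt)
    (k : ℕ) (n₁ : ℤ) (hn₁ : 1 < n₁) :
    qt k (n₁ • stdE 0)
      = qt k ((n₁ - 1) • stdE 0)
        - (if 1 ≤ k then ((n₁ : ℝ) - 2 + θ) * qt (k - 1) ((n₁ - 1) • stdE 0) else 0)
        + (if 1 ≤ k then ((n₁ : ℝ) - 2 + θ * Q 0) * qt (k - 1) ((n₁ - 2) • stdE 0) else 0) :=
  recursion_fit_PIM_general θ P Q hPIM q qt hq hqt k n₁ hn₁
end
end

section
/- Let q^{(σ)} be a family of sampling probabilities and let q̃_k (k ∈ ℕ) be a family of asymptotic-expansion coefficients for q^{(σ)}. Then the first-order coefficient satisfies the explicit formulas: (i) q̃_1(e_1) = −θ(1 − P_{11}); (ii) q̃_1(n_1 e_1) = −n_1 θ(1 − P_{11}) for every integer n_1 ≥ 1; and (iii) q̃_1(e_i) = θ P_{1i}(1 − θ) + θ² ∑_{j=2}^d P_{1j} P_{ji} for every i = 2,…,d. -/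
open Finset Filter Asymptotics

noncomputable section

/-!
Multiplying the consistency condition at `n` by `σ ^ (‖n‖ - n₁)` and the recursion at `n` by
`σ ^ (‖n‖ - n₁ - 1)` turns every term into `σ ^ (-k)`, `k ≥ 0`, times a rescaled probability
`σ ^ (‖m‖ - m₁) q^{(σ)}(m) = q̃₀(m) + q̃₁(m) σ⁻¹ + O(σ⁻²)`. Comparing the coefficients of `σ⁰`
and `σ⁻¹` gives linear relations between `q̃₀` and `q̃₁` at neighbouring configurations:
consistency yields `q̃₀(n₁e₁) = 1` and `q̃₁((n₁+1)e₁) = q̃₁(n₁e₁) - ∑_{i≥2} q̃₀(n₁e₁ + e_i)`,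
the leading order of the recursion yields `q̃₀(n₁e₁ + e_i) = θP_{1i}` and `q̃₀(e_i + e_l)`, and
the first order of the recursion at `e_i` then yields `q̃₁(e_i)`.
-/

/-- The coefficients are indexed by `ℤ` so that multiplication by `σ⁻¹` shifts the index. -/
def HasExpansion (f : ℝ → ℝ) (c : ℤ → ℝ) : Prop :=
  (fun σ => f σ - (c 0 + c 1 * σ⁻¹)) =O[atTop] fun σ => σ ^ (-2 : ℤ)

namespace HasExpansion

variable {f g : ℝ → ℝ} {c c' : ℤ → ℝ}

theorem congr (h : HasExpansion f c) (hfg : f =ᶠ[atTop] g) : HasExpansion g c :=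
  IsBigO.congr' h (hfg.sub EventuallyEq.rfl) EventuallyEq.rfl

theorem zero : HasExpansion (fun _ => 0) 0 :=
  (isBigO_zero _ _).congr_left fun σ => by simp

theorem add (hf : HasExpansion f c) (hg : HasExpansion g c') :
    HasExpansion (fun σ => f σ + g σ) (fun r => c r + c' r) :=
  (IsBigO.add hf hg).congr_left fun σ => by ring

theorem const_mul (a : ℝ) (hf : HasExpansion f c) :
    HasExpansion (fun σ => a * f σ) (fun r => a * c r) :=
  (IsBigO.const_mul_left hf a).congr_left fun σ => by ring

theorem sum {ι : Type*} {s : Finset ι} {f : ι → ℝ → ℝ} {c : ι → ℤ → ℝ}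
    (h : ∀ i ∈ s, HasExpansion (f i) (c i)) :
    HasExpansion (fun σ => ∑ i ∈ s, f i σ) (fun r => ∑ i ∈ s, c i r) :=
  (IsBigO.sum h).congr_left fun σ => by
    simp [Finset.sum_sub_distrib, Finset.sum_add_distrib, Finset.sum_mul]

theorem inv_mul (hf : HasExpansion f c) (hc : c (-1) = 0) :
    HasExpansion (fun σ => σ⁻¹ * f σ) (fun r => c (r - 1)) := by
  have hinv : (fun σ : ℝ => σ⁻¹) =O[atTop] fun _ => (1 : ℝ) :=
    tendsto_inv_atTop_zero.isBigO_one ℝ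
  have hsq : (fun σ : ℝ => c 1 * (σ⁻¹ * σ⁻¹)) =O[atTop] fun σ => σ ^ (-2 : ℤ) :=
    (isBigO_refl _ _).const_mul_left _ |>.congr_right fun σ => by simp [zpow_neg, sq]
  refine (((hinv.mul hf).congr_right fun σ => one_mul _).add hsq).congr_left fun σ => ?_
  norm_num [hc]
  ring

theorem zpow_neg_mul (hf : HasExpansion f c) (hc : ∀ r < 0, c r = 0) (k : ℕ) :
    HasExpansion (fun σ => σ ^ (-(k : ℤ)) * f σ) (fun r => c (r - k)) := by
  induction k with
  | zero => simpa using hf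
  | succ k ih =>
    have hfun : (fun σ => σ⁻¹ * (σ ^ (-(k : ℤ)) * f σ)) =ᶠ[atTop]
        fun σ => σ ^ (-((k + 1 : ℕ) : ℤ)) * f σ := by
      filter_upwards [eventually_ne_atTop 0] with σ hσ
      rw [← mul_assoc, ← zpow_neg_one, ← zpow_add₀ hσ]
      push_cast
      ring_nf
    have hc' : (fun r => c (r - 1 - k)) = fun r => c (r - (k + 1 : ℕ)) := by
      funext r
      push_cast
      ring_nf
    simpa only [hc'] using (ih.inv_mul (hc _ (by omega))).congr hfun

theorem coeff_eq (h : HasExpansion f c) (h' : HasExpansion f c') {r : ℤ} (hr : r = 0 ∨ r = 1) :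
    c r = c' r := by
  have hd : (fun σ : ℝ => (c' 0 - c 0) + (c' 1 - c 1) * σ⁻¹) =O[atTop]
      fun σ => σ ^ (-2 : ℤ) :=
    (IsBigO.sub h h').congr_left fun σ => by ring
  have h0 : c' 0 - c 0 = 0 := tendsto_nhds_unique
    (by simpa using tendsto_const_nhds.add (tendsto_inv_atTop_zero.const_mul (c' 1 - c 1)))
    (hd.trans_tendsto (tendsto_zpow_atTop_zero (by norm_num)))
  have hconst : (fun _ : ℝ => c' 1 - c 1) =O[atTop] fun σ : ℝ => σ⁻¹ := by
    refine ((isBigO_refl (fun σ : ℝ => σ) atTop).mul hd).congr' ?_ ?_ <;>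
      filter_upwards [eventually_ne_atTop 0] with σ hσ
    · rw [h0]
      field_simp
      ring
    · simp [zpow_neg, sq]
      field_simp
  have h1 : c' 1 - c 1 = 0 :=
    tendsto_nhds_unique tendsto_const_nhds (hconst.trans_tendsto tendsto_inv_atTop_zero)
  rcases hr with rfl | rfl <;> linarith

end HasExpansion

section Configurations

variable {d : ℕ}

def tailTot [NeZero d] (n : Fin d → ℤ) : ℤ := tot n - n 0

theorem tot_stdE (i : Fin d) : tot (stdE i) = 1 := by
  simp [tot, stdE]

theorem tot_add (n m : Fin d → ℤ) : tot (n + m) = tot n + tot m := by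
  simp [tot, Finset.sum_add_distrib]

variable [NeZero d]

@[simp]
theorem tailTot_zero : tailTot (0 : Fin d → ℤ) = 0 := by
  simp [tailTot, tot]

theorem ne_zero_of_tailTot_ne_zero {n : Fin d → ℤ} (h : tailTot n ≠ 0) : n ≠ 0 := by
  rintro rfl
  exact h tailTot_zero

@[simp]
theorem tailTot_add (n m : Fin d → ℤ) : tailTot (n + m) = tailTot n + tailTot m := by
  simp only [tailTot, tot, Pi.add_apply, Finset.sum_add_distrib]
  ring

@[simp]
theorem tailTot_sub (n m : Fin d → ℤ) : tailTot (n - m) = tailTot n - tailTot m := by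
  simp only [tailTot, tot, Pi.sub_apply, Finset.sum_sub_distrib]
  ring

@[simp]
theorem tailTot_smul (a : ℤ) (n : Fin d → ℤ) : tailTot (a • n) = a * tailTot n := by
  simp only [tailTot, tot, Pi.smul_apply, smul_eq_mul, ← Finset.mul_sum]
  ring

@[simp]
theorem tailTot_stdE (i : Fin d) : tailTot (stdE i) = if i = 0 then 0 else 1 := by
  simp only [tailTot, tot_stdE, stdE, eq_comm (a := (0 : Fin d))]
  split_ifs <;> norm_num

theorem tailTot_stdE_nonneg (i : Fin d) : 0 ≤ tailTot (stdE i) := by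
  rw [tailTot_stdE]; split_ifs <;> norm_num

theorem tailTot_stdE_le_one (i : Fin d) : tailTot (stdE i) ≤ 1 := by
  rw [tailTot_stdE]; split_ifs <;> norm_num

end Configurations

theorem isNatVec_stdE {d : ℕ} (i : Fin d) : IsNatVec (stdE i) := fun j => by
  unfold stdE; split_ifs <;> norm_num

theorem IsNatVec.add {d : ℕ} {n m : Fin d → ℤ} (hn : IsNatVec n) (hm : IsNatVec m) :
    IsNatVec (n + m) := fun j => add_nonneg (hn j) (hm j)

theorem IsNatVec.smul {d : ℕ} {a : ℤ} (ha : 0 ≤ a) {n : Fin d → ℤ} (hn : IsNatVec n) :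
    IsNatVec (a • n) := fun j => mul_nonneg ha (hn j)

theorem sum_stdE_mul {d : ℕ} (i : Fin d) (F : Fin d → ℝ) : ∑ j, (stdE i j : ℝ) * F j = F i := by
  simp [stdE]

theorem sum_add_apply_mul {d : ℕ} (n m : Fin d → ℤ) (F : Fin d → ℝ) :
    ∑ j, ((n + m) j : ℝ) * F j = ∑ j, (n j : ℝ) * F j + ∑ j, (m j : ℝ) * F j := by
  simp [add_mul, Finset.sum_add_distrib]

theorem sum_smul_apply_mul {d : ℕ} (a : ℤ) (n : Fin d → ℤ) (F : Fin d → ℝ) :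
    ∑ j, ((a • n) j : ℝ) * F j = a * ∑ j, (n j : ℝ) * F j := by
  simp [Finset.mul_sum, mul_assoc]

section Expansion

variable {d : ℕ} [NeZero d] {θ : ℝ} {P : Fin d → Fin d → ℝ}
  {q : ℝ → (Fin d → ℤ) → ℝ} {qt : ℕ → (Fin d → ℤ) → ℝ}

/-- The coefficient of `σ ^ (-r)` in the expansion of `σ ^ s * q^{(σ)}(m)`. -/
def scaledCoeff (qt : ℕ → (Fin d → ℤ) → ℝ) (s : ℤ) (m : Fin d → ℤ) (r : ℤ) : ℝ :=
  if 0 ≤ s - tailTot m + r then qt (s - tailTot m + r).toNat m else 0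

theorem hasExpansion_tailTot_zpow_mul (hq : IsSamplingFamily θ P q)
    (hqt : IsExpansionCoeffs q qt) (m : Fin d → ℤ) :
    HasExpansion (fun σ => σ ^ tailTot m * q σ m) (scaledCoeff qt (tailTot m) m) := by
  by_cases hm : ∃ i, m i < 0
  · have hc : scaledCoeff qt (tailTot m) m = 0 := by
      funext r
      simp [scaledCoeff, hqt.2.2.1 _ m hm]
    refine hc ▸ HasExpansion.zero.congr ?_
    filter_upwards [eventually_gt_atTop 0] with σ hσ
    simp [hq.2.1 σ hσ m hm]
  · simp only [not_exists, not_lt] at hm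
    refine (hqt.2.2.2 m hm 1).congr (fun σ => ?_) fun σ => by norm_num
    simp [scaledCoeff, Finset.sum_range_succ, tailTot]

theorem hasExpansion_zpow_mul (hq : IsSamplingFamily θ P q) (hqt : IsExpansionCoeffs q qt)
    {s : ℤ} {m : Fin d → ℤ} (hs : s ≤ tailTot m) :
    HasExpansion (fun σ => σ ^ s * q σ m) (scaledCoeff qt s m) := by
  obtain ⟨k, hk⟩ := Int.eq_ofNat_of_zero_le (sub_nonneg.2 hs)
  have h := (hasExpansion_tailTot_zpow_mul hq hqt m).zpow_neg_mul
    (fun r hr => by simp [scaledCoeff, hr.not_ge]) k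
  have hc : (fun r => scaledCoeff qt (tailTot m) m (r - k)) = scaledCoeff qt s m := by
    funext r
    simp only [scaledCoeff, ← hk]
    ring_nf
  refine hc ▸ h.congr ?_
  filter_upwards [eventually_ne_atTop 0] with σ hσ
  rw [← mul_assoc, ← zpow_add₀ hσ, ← hk]
  ring_nf

end Expansion

section CoefficientEquations

variable {d : ℕ} [NeZero d] {θ : ℝ} {P : Fin d → Fin d → ℝ}
  {q : ℝ → (Fin d → ℤ) → ℝ} {qt : ℕ → (Fin d → ℤ) → ℝ}

theorem consistency_coeff (hq : IsSamplingFamily θ P q) (hqt : IsExpansionCoeffs q qt)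
    {n : Fin d → ℤ} (hn : IsNatVec n) {r : ℤ} (hr : r = 0 ∨ r = 1) :
    ∑ i, scaledCoeff qt (tailTot n) (n + stdE i) r = scaledCoeff qt (tailTot n) n r := by
  have hsum := HasExpansion.sum fun i (_ : i ∈ univ) => hasExpansion_zpow_mul hq hqt
    (m := n + stdE i) (s := tailTot n) (by simp only [tailTot_add]; linarith [tailTot_stdE_nonneg i])
  refine hsum.coeff_eq ((hasExpansion_zpow_mul hq hqt le_rfl).congr ?_) hr
  filter_upwards [eventually_gt_atTop 0] with σ hσ
  rw [← Finset.mul_sum, hq.2.2.1 σ hσ n hn]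

theorem recursion_coeff (hq : IsSamplingFamily θ P q) (hqt : IsExpansionCoeffs q qt)
    {n : Fin d → ℤ} (hn : IsNatVec n) (hn0 : n ≠ 0) {r : ℤ} (hr : r = 0 ∨ r = 1) :
    (tot n : ℝ) * ((tot n : ℝ) - 1 + θ) * scaledCoeff qt (tailTot n - 1) n r
        + (tailTot n : ℝ) * scaledCoeff qt (tailTot n) n r
      = (∑ i, (n i : ℝ) * ((n i : ℝ) - 1) * scaledCoeff qt (tailTot n - 1) (n - stdE i) r)
        + (∑ i, ∑ j, (n i : ℝ) * θ * P j i
            * scaledCoeff qt (tailTot n - 1) (n - stdE i + stdE j) r)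
        + (tot n : ℝ) * ∑ l ∈ univ.erase 0, scaledCoeff qt (tailTot n) (n + stdE l) r := by
  have hexp {s : ℤ} {m : Fin d → ℤ} (hs : s ≤ tailTot m) := hasExpansion_zpow_mul hq hqt hs
  have hL := ((hexp (m := n) (s := tailTot n - 1) (by omega)).const_mul
    ((tot n : ℝ) * ((tot n : ℝ) - 1 + θ))).add ((hexp (m := n) le_rfl).const_mul (tailTot n : ℝ))
  have hR₁ := HasExpansion.sum fun i (_ : i ∈ univ) =>
    (hexp (m := n - stdE i) (s := tailTot n - 1)
      (by simp only [tailTot_sub]; linarith [tailTot_stdE_le_one i])).const_mul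
        ((n i : ℝ) * ((n i : ℝ) - 1))
  have hR₂ := HasExpansion.sum fun i (_ : i ∈ univ) => HasExpansion.sum fun j (_ : j ∈ univ) =>
    (hexp (m := n - stdE i + stdE j) (s := tailTot n - 1) (by
      simp only [tailTot_sub, tailTot_add]
      linarith [tailTot_stdE_le_one i, tailTot_stdE_nonneg j])).const_mul ((n i : ℝ) * θ * P j i)
  have hR₃ := HasExpansion.sum fun l (_ : l ∈ univ.erase 0) =>
    hexp (m := n + stdE l) (s := tailTot n)
      (by simp only [tailTot_add]; linarith [tailTot_stdE_nonneg l])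
  refine (hL.congr ?_).coeff_eq ((hR₁.add hR₂).add (hR₃.const_mul (tot n : ℝ))) hr
  filter_upwards [eventually_gt_atTop 0] with σ hσ
  have hpow : σ ^ tailTot n = σ ^ (tailTot n - 1) * σ := by
    rw [← zpow_add_one₀ hσ.ne', sub_add_cancel]
  have htail : (tailTot n : ℝ) = tot n - n 0 := by push_cast [tailTot]; rfl
  rw [hpow, htail]
  simp only [mul_left_comm _ (σ ^ (tailTot n - 1)), ← Finset.mul_sum]
  linear_combination σ ^ (tailTot n - 1) * hq.2.2.2 σ hσ n hn hn0

end CoefficientEquations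

section Coefficients

variable {d : ℕ} [NeZero d] {θ : ℝ} {P : Fin d → Fin d → ℝ}
  {q : ℝ → (Fin d → ℤ) → ℝ} {qt : ℕ → (Fin d → ℤ) → ℝ}

theorem scaledCoeff_of_neg {s r : ℤ} {m : Fin d → ℤ} (h : s - tailTot m + r < 0) :
    scaledCoeff qt s m r = 0 := by
  simp [scaledCoeff, h.not_ge]

theorem scaledCoeff_of_eq {s r : ℤ} {m : Fin d → ℤ} {k : ℕ} (h : s - tailTot m + r = k) :
    scaledCoeff qt s m r = qt k m := by
  simp [scaledCoeff, h]

theorem sum_mul_scaledCoeff_add_stdE {s : ℤ} {m : Fin d → ℤ} (hs : s = tailTot m)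
    (w : Fin d → ℝ) :
    ∑ x, w x * scaledCoeff qt s (m + stdE x) 0 = w 0 * qt 0 (m + stdE 0) := by
  rw [Fintype.sum_eq_single 0 fun x hx => by rw [scaledCoeff_of_neg (by simp [hs, hx]), mul_zero],
    scaledCoeff_of_eq (k := 0) (by simp [hs])]

variable (hq : IsSamplingFamily θ P q) (hqt : IsExpansionCoeffs q qt)
include hq hqt

theorem qt_zero_add_stdE_zero {n : Fin d → ℤ} (hn : IsNatVec n) :
    qt 0 (n + stdE 0) = qt 0 n := by
  have h := consistency_coeff hq hqt hn (r := 0) (Or.inl rfl)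
  rw [← Finset.add_sum_erase _ _ (mem_univ 0), Finset.sum_eq_zero fun i hi =>
    scaledCoeff_of_neg (by simp [Finset.ne_of_mem_erase hi])] at h
  simpa [scaledCoeff] using h

theorem qt_one_add_stdE_zero {n : Fin d → ℤ} (hn : IsNatVec n) :
    qt 1 (n + stdE 0) + ∑ i ∈ univ.erase 0, qt 0 (n + stdE i) = qt 1 n := by
  have h := consistency_coeff hq hqt hn (r := 1) (Or.inr rfl)
  rw [← Finset.add_sum_erase _ _ (mem_univ 0), Finset.sum_congr rfl fun i hi =>
    scaledCoeff_of_eq (k := 0) (by simp [Finset.ne_of_mem_erase hi])] at h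
  simpa [scaledCoeff] using h

theorem qt_zero_smul_stdE_zero {a : ℤ} (ha : 0 ≤ a) : qt 0 (a • stdE 0) = 1 := by
  induction a, ha using Int.leInduction with
  | base => simpa using hqt.1
  | succ a ha ih =>
    rw [add_smul, one_smul, qt_zero_add_stdE_zero hq hqt ((isNatVec_stdE 0).smul ha), ih]

theorem qt_zero_smul_stdE_zero_add_stdE {a : ℤ} (ha : 0 ≤ a) {i : Fin d} (hi : i ≠ 0) :
    qt 0 (a • stdE 0 + stdE i) = θ * P 0 i := by
  have htail : tailTot (a • stdE 0 + stdE i) = 1 := by simp [hi, -zsmul_eq_mul]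
  have h := recursion_coeff hq hqt (((isNatVec_stdE 0).smul ha).add (isNatVec_stdE i))
    (ne_zero_of_tailTot_ne_zero (by rw [htail]; norm_num)) (Or.inl rfl)
  simp only [mul_assoc, ← Finset.mul_sum, htail, sub_self, sum_add_apply_mul,
    sum_smul_apply_mul, sum_stdE_mul, add_sub_cancel_right] at h
  have hL : scaledCoeff qt 0 (a • stdE 0 + stdE i) 0 = 0 :=
    scaledCoeff_of_neg (by simp [hi, -zsmul_eq_mul])
  have hL' : scaledCoeff qt 1 (a • stdE 0 + stdE i) 0 = qt 0 (a • stdE 0 + stdE i) :=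
    scaledCoeff_of_eq (by simp [hi, -zsmul_eq_mul])
  have hS₁ : scaledCoeff qt 0 (a • stdE 0 + stdE i - stdE 0) 0 = 0 :=
    scaledCoeff_of_neg (by simp [hi, -zsmul_eq_mul])
  have hS₂ : ((a • stdE 0 + stdE i : Fin d → ℤ) i : ℝ) - 1 = 0 := by simp [stdE, hi]
  have hS₃ : ∑ x, P x 0 * scaledCoeff qt 0 (a • stdE 0 + stdE i - stdE 0 + stdE x) 0 = 0 :=
    Finset.sum_eq_zero fun x _ => by
      rw [scaledCoeff_of_neg (by simp [hi, -zsmul_eq_mul]; split_ifs <;> norm_num), mul_zero]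
  have hS₄ : ∑ x, P x i * scaledCoeff qt 0 (a • stdE 0 + stdE x) 0 = P 0 i := by
    rw [sum_mul_scaledCoeff_add_stdE (by simp [-zsmul_eq_mul]),
      qt_zero_add_stdE_zero hq hqt ((isNatVec_stdE 0).smul ha), qt_zero_smul_stdE_zero hq hqt ha,
      mul_one]
  have hS₅ : ∑ x ∈ univ.erase 0, scaledCoeff qt 1 (a • stdE 0 + stdE i + stdE x) 0 = 0 :=
    Finset.sum_eq_zero fun x hx => scaledCoeff_of_neg (by
      simp [hi, Finset.ne_of_mem_erase hx, -zsmul_eq_mul])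
  rw [hL, hL', hS₁, hS₂, hS₃, hS₄, hS₅] at h
  linear_combination h

theorem qt_zero_stdE {i : Fin d} (hi : i ≠ 0) : qt 0 (stdE i) = θ * P 0 i := by
  simpa using qt_zero_smul_stdE_zero_add_stdE hq hqt le_rfl hi

theorem qt_zero_stdE_add_stdE_zero {i : Fin d} (hi : i ≠ 0) :
    qt 0 (stdE i + stdE 0) = θ * P 0 i := by
  simpa [add_comm] using qt_zero_smul_stdE_zero_add_stdE hq hqt zero_le_one hi

theorem qt_one_smul_stdE_zero (hP : ∑ j, P 0 j = 1) {a : ℤ} (ha : 0 ≤ a) :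
    qt 1 (a • stdE 0) = -a * θ * (1 - P 0 0) := by
  induction a, ha using Int.leInduction with
  | base => simpa using hqt.2.1 1 le_rfl
  | succ a ha ih =>
    have h := qt_one_add_stdE_zero hq hqt ((isNatVec_stdE 0).smul ha)
    rw [Finset.sum_congr rfl fun i hi =>
        qt_zero_smul_stdE_zero_add_stdE hq hqt ha (Finset.ne_of_mem_erase hi),
      ← Finset.mul_sum, Finset.sum_erase_eq_sub (mem_univ 0), hP, ih] at h
    rw [add_smul, one_smul]
    push_cast
    linear_combination h

theorem qt_zero_stdE_add_stdE {i l : Fin d} (hi : i ≠ 0) (hl : l ≠ 0) :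
    qt 0 (stdE i + stdE l) = θ ^ 2 * P 0 i * P 0 l + if i = l then θ * P 0 i else 0 := by
  have htail : tailTot (stdE i + stdE l) = 2 := by simp [hi, hl]
  have h := recursion_coeff hq hqt ((isNatVec_stdE i).add (isNatVec_stdE l))
    (ne_zero_of_tailTot_ne_zero (by rw [htail]; norm_num)) (Or.inl rfl)
  simp only [mul_assoc, ← Finset.mul_sum, htail, tot_add, tot_stdE, sum_add_apply_mul,
    sum_stdE_mul, add_sub_cancel_left, add_sub_cancel_right] at h
  have hL : scaledCoeff qt (2 - 1) (stdE i + stdE l) 0 = 0 :=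
    scaledCoeff_of_neg (by rw [htail]; norm_num)
  have hL' : scaledCoeff qt 2 (stdE i + stdE l) 0 = qt 0 (stdE i + stdE l) :=
    scaledCoeff_of_eq (by rw [htail]; norm_num)
  have hS₁ {j : Fin d} (hj : j ≠ 0) : scaledCoeff qt (2 - 1) (stdE j) 0 = θ * P 0 j := by
    rw [scaledCoeff_of_eq (k := 0) (by simp [hj]), qt_zero_stdE hq hqt hj]
  have hS₂ {j : Fin d} (hj : j ≠ 0) (w : Fin d → ℝ) :
      ∑ x, w x * scaledCoeff qt (2 - 1) (stdE j + stdE x) 0 = w 0 * (θ * P 0 j) := by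
    rw [sum_mul_scaledCoeff_add_stdE (by simp [hj]), qt_zero_stdE_add_stdE_zero hq hqt hj]
  have hS₃ : ∑ x ∈ univ.erase 0, scaledCoeff qt 2 (stdE i + stdE l + stdE x) 0 = 0 :=
    Finset.sum_eq_zero fun x hx => scaledCoeff_of_neg (by
      simp [hi, hl, Finset.ne_of_mem_erase hx])
  have hdiag : ((stdE i + stdE l) i : ℝ) - 1 = if i = l then 1 else 0 := by
    by_cases hil : i = l <;> norm_num [stdE, hil]
  have hdiag' : ((stdE i + stdE l) l : ℝ) - 1 = if i = l then 1 else 0 := by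
    by_cases hil : i = l <;> norm_num [stdE, hil, eq_comm (a := l)]
  rw [hL, hL', hS₁ hi, hS₁ hl, hS₂ hi, hS₂ hl, hS₃, hdiag, hdiag'] at h
  split_ifs at h ⊢ with hil
  · subst hil
    linear_combination h / 2
  · linear_combination h / 2

theorem qt_one_stdE (hP : ∑ j, P 0 j = 1) {i : Fin d} (hi : i ≠ 0) :
    qt 1 (stdE i) = θ * P 0 i * (1 - θ) + θ ^ 2 * ∑ j ∈ univ.erase 0, P 0 j * P j i := by
  have htail : tailTot (stdE i) = 1 := by simp [hi]
  have h := recursion_coeff hq hqt (isNatVec_stdE i)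
    (ne_zero_of_tailTot_ne_zero (by rw [htail]; norm_num)) (Or.inr rfl)
  simp only [mul_assoc, ← Finset.mul_sum, htail, tot_stdE, sum_stdE_mul, sub_self,
    zero_add] at h
  have hL : scaledCoeff qt 0 (stdE i) 1 = θ * P 0 i := by
    rw [scaledCoeff_of_eq (k := 0) (by simp [htail]), qt_zero_stdE hq hqt hi]
  have hL' : scaledCoeff qt 1 (stdE i) 1 = qt 1 (stdE i) := scaledCoeff_of_eq (by simp [htail])
  have hS₁ : ((stdE i i : ℤ) : ℝ) - 1 = 0 := by simp [stdE]
  have hS₂ : ∑ x, P x i * scaledCoeff qt 0 (stdE x) 1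
      = P 0 i * (-θ * (1 - P 0 0)) + θ * ∑ j ∈ univ.erase 0, P 0 j * P j i := by
    rw [← Finset.add_sum_erase _ _ (mem_univ 0), scaledCoeff_of_eq (k := 1) (by simp),
      Finset.mul_sum]
    congr 1
    · simpa using congrArg (P 0 i * ·) (qt_one_smul_stdE_zero hq hqt hP zero_le_one)
    · refine Finset.sum_congr rfl fun x hx => ?_
      rw [scaledCoeff_of_eq (k := 0) (by simp [Finset.ne_of_mem_erase hx]),
        qt_zero_stdE hq hqt (Finset.ne_of_mem_erase hx)]
      ring
  have hS₃ : ∑ x ∈ univ.erase 0, scaledCoeff qt 1 (stdE i + stdE x) 1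
      = θ ^ 2 * P 0 i * (1 - P 0 0) + θ * P 0 i := by
    rw [Finset.sum_congr rfl fun x hx => by
      rw [scaledCoeff_of_eq (k := 0) (by simp [hi, Finset.ne_of_mem_erase hx]),
        qt_zero_stdE_add_stdE hq hqt hi (Finset.ne_of_mem_erase hx)],
      Finset.sum_add_distrib, ← Finset.mul_sum, Finset.sum_erase_eq_sub (mem_univ 0), hP,
      Finset.sum_ite_eq, if_pos (Finset.mem_erase.2 ⟨hi, mem_univ i⟩)]
  rw [hL, hL', hS₁, hS₂, hS₃] at h
  linear_combination h

end Coefficients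

theorem first_order_coefficient_general {d : ℕ} (θ : ℝ)
    (P : Fin (d + 2) → Fin (d + 2) → ℝ)
    (hProw : ∀ i, ∑ j, P i j = 1)
    (q : ℝ → (Fin (d + 2) → ℤ) → ℝ) (qt : ℕ → (Fin (d + 2) → ℤ) → ℝ)
    (hq : IsSamplingFamily θ P q) (hqt : IsExpansionCoeffs q qt) :
    qt 1 (stdE 0) = - θ * (1 - P 0 0) ∧
    (∀ n₁ : ℤ, 1 ≤ n₁ → qt 1 (n₁ • stdE 0) = - (n₁ : ℝ) * θ * (1 - P 0 0)) ∧
    (∀ i : Fin (d + 2), i ≠ 0 →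
      qt 1 (stdE i)
        = θ * P 0 i * (1 - θ) + θ ^ 2 * ∑ j ∈ univ.erase 0, P 0 j * P j i) := by
  refine ⟨?_, fun n₁ hn₁ => ?_, fun i hi => qt_one_stdE hq hqt (hProw 0) hi⟩
  · simpa using qt_one_smul_stdE_zero hq hqt (hProw 0) zero_le_one
  · exact qt_one_smul_stdE_zero hq hqt (hProw 0) (by omega)

/-- **First-order coefficient**: explicit formulas for `q̃_1` at the boundary:
(i) `q̃_1(e_1) = -θ(1-P_{11})`; (ii) `q̃_1(n_1 e_1) = -n_1 θ(1-P_{11})` for `n_1 ≥ 1`;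
(iii) `q̃_1(e_i) = θP_{1i}(1-θ) + θ² ∑_{j=2}^d P_{1j}P_{ji}` for `i = 2,…,d`. -/
theorem first_order_coefficient {d : ℕ} (θ : ℝ) (hθ : 0 < θ)
    (P : Fin (d + 2) → Fin (d + 2) → ℝ)
    (hPnonneg : ∀ i j, 0 ≤ P i j) (hProw : ∀ i, ∑ j, P i j = 1)
    (q : ℝ → (Fin (d + 2) → ℤ) → ℝ) (qt : ℕ → (Fin (d + 2) → ℤ) → ℝ)
    (hq : IsSamplingFamily θ P q) (hqt : IsExpansionCoeffs q qt) :
    qt 1 (stdE 0) = - θ * (1 - P 0 0) ∧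
    (∀ n₁ : ℤ, 1 ≤ n₁ → qt 1 (n₁ • stdE 0) = - (n₁ : ℝ) * θ * (1 - P 0 0)) ∧
    (∀ i : Fin (d + 2), i ≠ 0 →
      qt 1 (stdE i)
        = θ * P 0 i * (1 - θ) + θ ^ 2 * ∑ j ∈ univ.erase 0, P 0 j * P j i) :=
  first_order_coefficient_general θ P hProw q qt hq hqt
end
end
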